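/- Every Rauzy class on an alphabet of at least 4 letters contains either a good pair or a degenerate* pair. -/

import Mathlib

/-- A "pair" on a finite alphabet `A`: two bijections (rows) from `A`
to positions `Fin (card A)` (position `i` represents the value `i+1`). -/
structure RPair (A : Type*) [Fintype A] where
  p : Fin 2 → A ≃ Fin (Fintype.card A)

variable {A : Type*} [Fintype A]

/-- The Rauzy move of type `ε`, as a relation: `Q = ε • P`. Row `ε` is fixed;
in row `1-ε` the last entry is cycled to just after the letter `z` occupying the
last position of row `ε` (0-indexed positions). -/
def Rmove (ε : Fin 2) (P Q : RPair A) : Prop :=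
  Q.p ε = P.p ε ∧
  ∀ z : A, ((P.p ε) z).val = Fintype.card A - 1 →
    ∀ b : A, ((Q.p (1 - ε)) b).val =
      if ((P.p (1 - ε)) b).val ≤ ((P.p (1 - ε)) z).val then ((P.p (1 - ε)) b).val
      else if ((P.p (1 - ε)) b).val < Fintype.card A - 1 then ((P.p (1 - ε)) b).val + 1
      else ((P.p (1 - ε)) z).val + 1

/-- A pair is irreducible if its two rows never occupy the first `k` positions
with the same set of letters, for `0 < k < card A`. -/
def IrreduciblePair (P : RPair A) : Prop :=
  ∀ k : ℕ, 0 < k → k < Fintype.card A →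
    {a : A | ((P.p 0) a).val < k} ≠ {a : A | ((P.p 1) a).val < k}

/-- A pair is standard if the first letter of each row is the last letter of the other. -/
def StandardPair (P : RPair A) : Prop :=
  (∀ a : A, ((P.p 0) a).val = 0 → ((P.p 1) a).val = Fintype.card A - 1) ∧
  (∀ z : A, ((P.p 1) z).val = 0 → ((P.p 0) z).val = Fintype.card A - 1)

/-- `Q` is reachable from `P` by finitely many Rauzy moves. -/
def InRauzyClass (P Q : RPair A) : Prop :=
  Relation.ReflTransGen (fun X Y : RPair A => ∃ ε, Rmove ε X Y) P Q

/-- `P'` is the (prefix) restriction of `P` to the sub-alphabet `S`: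
`p'_ε(b) = #{c ∈ S : p_ε(c) ≤ p_ε(b)}` (1-indexed values). -/
def IsRestrictionOf {A : Type*} [Fintype A] [DecidableEq A]
    (P : RPair A) (S : Finset A) (P' : RPair ↥S) : Prop :=
  ∀ (ε : Fin 2) (b : ↥S),
    ((P'.p ε) b).val + 1 =
      (Finset.univ.filter (fun c : ↥S => (P.p ε) (c : A) ≤ (P.p ε) (b : A))).card

/-- A standard pair is degenerate* if some letter occupies position `#A - 1`
in both rows. -/
def DegenerateStar {A : Type*} [Fintype A] (P : RPair A) : Prop :=
  StandardPair P ∧ ∃ c : A,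
    ((P.p 0) c).val = Fintype.card A - 2 ∧ ((P.p 1) c).val = Fintype.card A - 2

/-- The interior letters of a pair: those not in the first or last position of
either row. -/
def interiorLetters {A : Type*} [Fintype A] [DecidableEq A] (P : RPair A) : Finset A :=
  Finset.univ.filter (fun b : A =>
    ((P.p 0) b).val ≠ 0 ∧ ((P.p 1) b).val ≠ 0 ∧
    ((P.p 0) b).val ≠ Fintype.card A - 1 ∧ ((P.p 1) b).val ≠ Fintype.card A - 1)

/-- A standard pair is good if its restriction to the interior letters
(positions `2,…,#A-1`) is irreducible. -/
def GoodPair {A : Type*} [Fintype A] [DecidableEq A] (P : RPair A) : Prop :=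
  StandardPair P ∧
  ∀ P' : RPair ↥(interiorLetters P),
    IsRestrictionOf P (interiorLetters P) P' → IrreduciblePair P'


/-!
Rauzy moves are injective maps of the finite set of pairs, so a Rauzy class is strongly
connected. A letter that is never last in row `δ` within the class never moves in that row, and
neither does anything to its left; so these letters form an initial segment of row `δ`, and the
letters never last in either row form a common initial segment of both rows, which
irreducibility forces to be empty. Hence the first letter of the top row can be brought to the
end of the bottom row, and rotating the top row then gives a standard pair.

A standard pair is good unless its two rows share the letters in the interior positions
`1, …, j` for some `j ≤ n - 3`, and at `j = n - 3` it is degenerate*. If the largest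
such `j` is `k < n - 3`, four rotations exchange two blocks of interior letters in each row and
leave a standard pair with no such `j ≥ k`; descending on `k` ends at a good pair or at a
degenerate* one.
-/

open Relation Finset

def insertPos (N μ v : ℕ) : ℕ :=
  if v ≤ μ then v else if v < N - 1 then v + 1 else μ + 1

def insertPerm (N μ : ℕ) : Equiv.Perm (Fin N) where
  toFun x := ⟨insertPos N μ x, by unfold insertPos; split_ifs <;> omega⟩
  invFun x := ⟨if x.val ≤ μ then x else if x.val = μ + 1 then N - 1 else x - 1, by
    split_ifs <;> omega⟩
  left_inv x := by ext; simp only [insertPos]; split_ifs <;> omega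
  right_inv x := by ext; simp only [insertPos]; split_ifs <;> omega

/-- The position of `v` after `t` cyclic shifts of the positions `μ + 1, …, N - 1`. -/
def rotatePos (N μ t v : ℕ) : ℕ :=
  if v ≤ μ then v else if v + t ≤ N - 1 then v + t else v + t - (N - 1 - μ)

lemma insertPos_rotatePos {N μ t v : ℕ} (hv : v < N) (ht : t + 1 ≤ N - 1 - μ) :
    insertPos N μ (rotatePos N μ t v) = rotatePos N μ (t + 1) v := by
  unfold insertPos rotatePos; split_ifs <;> omega

lemma fin_two_eq_one_sub_of_ne {δ ε : Fin 2} (h : δ ≠ ε) : δ = 1 - ε := by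
  revert δ ε; decide

lemma fin_two_one_sub_ne (ε : Fin 2) : 1 - ε ≠ ε := by
  revert ε; decide

section

variable {P Q R X Y : RPair A} {δ ε : Fin 2} {b c z : A}

lemma RPair.ext_p (h : P.p = Q.p) : P = Q := by
  cases P; cases Q; simpa using h

instance : Finite (RPair A) := Finite.of_injective RPair.p fun _ _ => RPair.ext_p

lemma RPair.eq_of_pos_eq (h : (P.p δ b).val = (P.p δ c).val) : b = c :=
  (P.p δ).injective (Fin.ext h)

lemma RPair.exists_pos_eq (P : RPair A) (δ : Fin 2) {m : ℕ} (hm : m < Fintype.card A) :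
    ∃ c, (P.p δ c).val = m :=
  ⟨(P.p δ).symm ⟨m, hm⟩, by simp⟩

lemma Rmove.pos_eq_insertPos (hm : Rmove ε P Q) (hδ : δ ≠ ε)
    (hz : (P.p ε z).val = Fintype.card A - 1) (c : A) :
    (Q.p δ c).val = insertPos (Fintype.card A) (P.p δ z).val (P.p δ c).val := by
  obtain rfl := fin_two_eq_one_sub_of_ne hδ
  exact hm.2 z hz c

lemma Rmove.p_eq_or (h : 0 < Fintype.card A) (hm : Rmove ε P Q) (δ : Fin 2) :
    Q.p δ = P.p δ ∨ ∃ z, (P.p (1 - δ) z).val = Fintype.card A - 1 ∧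
      ∀ c, (Q.p δ c).val = insertPos (Fintype.card A) (P.p δ z).val (P.p δ c).val := by
  by_cases hδ : δ = ε
  · exact Or.inl (hδ ▸ hm.1)
  · obtain rfl := fin_two_eq_one_sub_of_ne (Ne.symm hδ)
    obtain ⟨z, hz⟩ := P.exists_pos_eq (1 - δ) (m := Fintype.card A - 1) (by omega)
    exact Or.inr ⟨z, hz, hm.pos_eq_insertPos hδ hz⟩

def RPair.lastLetter (P : RPair A) (ε : Fin 2) (h : 0 < Fintype.card A) : A :=
  (P.p ε).symm ⟨Fintype.card A - 1, by omega⟩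

def RPair.move (h : 0 < Fintype.card A) (ε : Fin 2) (P : RPair A) : RPair A :=
  ⟨fun δ => if δ = ε then P.p δ
    else (P.p δ).trans (insertPerm _ (P.p δ (P.lastLetter ε h)).val)⟩

lemma rmove_move (h : 0 < Fintype.card A) (ε : Fin 2) (P : RPair A) :
    Rmove ε P (RPair.move h ε P) := by
  refine ⟨by simp [RPair.move], fun z hz b => ?_⟩
  have hz' : z = P.lastLetter ε h := by
    rw [RPair.lastLetter, Equiv.eq_symm_apply]; exact Fin.ext hz
  simp [RPair.move, fin_two_one_sub_ne, hz', insertPerm, insertPos]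

lemma Rmove.eq_move (h : 0 < Fintype.card A) (hm : Rmove ε P Q) : Q = RPair.move h ε P := by
  have hz : (P.p ε (P.lastLetter ε h)).val = Fintype.card A - 1 := by simp [RPair.lastLetter]
  refine RPair.ext_p (funext fun δ => ?_)
  by_cases hδ : δ = ε
  · subst hδ; rw [hm.1, (rmove_move h δ P).1]
  · ext c
    rw [hm.pos_eq_insertPos hδ hz, (rmove_move h ε P).pos_eq_insertPos hδ hz]

lemma RPair.move_injective (h : 0 < Fintype.card A) (ε : Fin 2) :
    Function.Injective (RPair.move h ε : RPair A → RPair A) := by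
  intro P Q hPQ
  have hε : P.p ε = Q.p ε := by
    rw [← (rmove_move h ε P).1, ← (rmove_move h ε Q).1, hPQ]
  set z := P.lastLetter ε h
  have hzP : (P.p ε z).val = Fintype.card A - 1 := by simp [z, RPair.lastLetter]
  have hzQ : (Q.p ε z).val = Fintype.card A - 1 := by rw [← hε]; exact hzP
  refine RPair.ext_p (funext fun δ => ?_)
  by_cases hδ : δ = ε
  · subst hδ; exact hε
  have hrow c := ((rmove_move h ε P).pos_eq_insertPos hδ hzP c).symm.trans
    (hPQ ▸ (rmove_move h ε Q).pos_eq_insertPos hδ hzQ c)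
  -- an insertion after position `μ` fixes `μ`, so both insertions are the same
  have hμ : (P.p δ z).val = (Q.p δ z).val := by
    simpa [insertPos] using hrow z
  ext c
  have hc : insertPerm _ (Q.p δ z).val (P.p δ c) = insertPerm _ (Q.p δ z).val (Q.p δ c) :=
    Fin.ext (hμ ▸ hrow c)
  exact congrArg Fin.val ((insertPerm _ _).injective hc)

lemma inRauzyClass_iterate_move (h : 0 < Fintype.card A) (ε : Fin 2) (k : ℕ) (P : RPair A) :
    InRauzyClass P ((RPair.move h ε)^[k] P) := by
  induction k with
  | zero => exact ReflTransGen.refl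
  | succ k ih =>
    rw [Function.iterate_succ_apply']
    exact ih.tail ⟨ε, rmove_move h ε _⟩

/-- Each move is a permutation of the finite set of pairs, so it can be undone by iterating it. -/
lemma Rmove.inRauzyClass_symm (h : 0 < Fintype.card A) (hm : Rmove ε P Q) :
    InRauzyClass Q P := by
  obtain rfl := hm.eq_move h
  obtain ⟨k, hk, hper⟩ :=
    Function.mem_periodicPts.mp ((RPair.move_injective h ε).mem_periodicPts P)
  obtain ⟨k, rfl⟩ : ∃ l, k = l + 1 := ⟨k - 1, by omega⟩
  have := inRauzyClass_iterate_move h ε k (RPair.move h ε P)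
  rwa [← Function.iterate_succ_apply, hper.eq] at this

lemma InRauzyClass.symm (h : 0 < Fintype.card A) (hPQ : InRauzyClass P Q) :
    InRauzyClass Q P := by
  induction hPQ with
  | refl => exact ReflTransGen.refl
  | tail _ hstep ih =>
    obtain ⟨ε, hm⟩ := hstep
    exact (hm.inRauzyClass_symm h).trans ih

lemma RPair.exists_rotate (hδ : δ ≠ ε) (hz : (R.p ε z).val = Fintype.card A - 1) {μ t : ℕ}
    (hμ : (R.p δ z).val = μ) (ht : t ≤ Fintype.card A - 1 - μ) :
    ∃ Q, InRauzyClass R Q ∧ Q.p ε = R.p ε ∧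
      ∀ c, (Q.p δ c).val = rotatePos (Fintype.card A) μ t (R.p δ c).val := by
  have h : 0 < Fintype.card A := (R.p ε z).pos
  induction t with
  | zero =>
    refine ⟨R, ReflTransGen.refl, rfl, fun c => ?_⟩
    unfold rotatePos; split_ifs <;> omega
  | succ t ih =>
    obtain ⟨Q, hRQ, hε, hδQ⟩ := ih (by omega)
    have hm := rmove_move h ε Q
    have hzQ : (Q.p ε z).val = Fintype.card A - 1 := by rw [hε]; exact hz
    have hμQ : (Q.p δ z).val = μ := by
      rw [hδQ, hμ]; unfold rotatePos; simp
    refine ⟨RPair.move h ε Q, hRQ.tail ⟨ε, hm⟩, hm.1.trans hε, fun c => ?_⟩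
    rw [hm.pos_eq_insertPos hδ hzQ, hμQ, hδQ, insertPos_rotatePos (R.p δ c).isLt (by omega)]

lemma pos_eq_zero_of_inRauzyClass (hPQ : InRauzyClass P Q) (hc : (P.p δ c).val = 0) :
    (Q.p δ c).val = 0 := by
  have h := (P.p δ c).pos
  induction hPQ with
  | refl => exact hc
  | tail _ hstep ih =>
    obtain ⟨ε, hm⟩ := hstep
    rcases hm.p_eq_or h δ with hrow | ⟨z, -, hrow⟩
    · rw [hrow]; exact ih
    · rw [hrow, ih]; simp [insertPos]

def RPair.neverLast (P : RPair A) (δ : Fin 2) : Set A :=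
  {c | ∀ Q, InRauzyClass P Q → (Q.p δ c).val ≠ Fintype.card A - 1}

lemma pos_le_pos_of_mem_neverLast (hc : c ∈ P.neverLast δ) (hPX : InRauzyClass P X)
    (hXY : InRauzyClass X Y) : (X.p δ c).val ≤ (Y.p δ c).val := by
  have h := (P.p δ c).pos
  induction hXY with
  | refl => exact le_rfl
  | tail hXY' hstep ih =>
    obtain ⟨ε, hm⟩ := hstep
    have hlast := hc _ (hPX.trans hXY')
    rcases hm.p_eq_or h δ with hrow | ⟨z, -, hrow⟩
    · rw [hrow]; exact ih
    · rw [hrow]; unfold insertPos; split_ifs <;> omega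

/-- Moves only push letters to the right, and the Rauzy class is strongly connected. -/
lemma pos_eq_of_mem_neverLast (hc : c ∈ P.neverLast δ) (hPQ : InRauzyClass P Q) :
    (Q.p δ c).val = (P.p δ c).val :=
  le_antisymm (pos_le_pos_of_mem_neverLast hc hPQ (hPQ.symm (P.p δ c).pos))
    (pos_le_pos_of_mem_neverLast hc ReflTransGen.refl hPQ)

lemma pos_le_pos_last_of_mem_neverLast (hc : c ∈ P.neverLast δ) (hPQ : InRauzyClass P Q)
    (hδ : δ ≠ ε) (hz : (Q.p ε z).val = Fintype.card A - 1) :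
    (Q.p δ c).val ≤ (Q.p δ z).val := by
  have hm := rmove_move (Q.p ε z).pos ε Q
  have h1 := pos_eq_of_mem_neverLast hc hPQ
  have h2 := pos_eq_of_mem_neverLast hc (hPQ.tail ⟨ε, hm⟩)
  have hlast := hc Q hPQ
  rw [hm.pos_eq_insertPos hδ hz] at h2
  unfold insertPos at h2; split_ifs at h2 <;> omega

/-- Letters to the left of `c` never move: every move acting on row `δ` inserts to the right of
`c`. -/
lemma mem_neverLast_of_pos_le (hc : c ∈ P.neverLast δ) (hb : (P.p δ b).val ≤ (P.p δ c).val) :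
    b ∈ P.neverLast δ := by
  have h := (P.p δ c).pos
  have hfix : ∀ Q, InRauzyClass P Q → (Q.p δ b).val = (P.p δ b).val := by
    intro Q hPQ
    induction hPQ with
    | refl => rfl
    | tail hPX hstep ih =>
      obtain ⟨ε, hm⟩ := hstep
      rcases hm.p_eq_or h δ with hrow | ⟨z, hz, hrow⟩
      · rw [hrow]; exact ih
      · have hcz := pos_le_pos_last_of_mem_neverLast hc hPX (fin_two_one_sub_ne δ).symm hz
        rw [pos_eq_of_mem_neverLast hc hPX] at hcz
        rw [hrow, ih]; unfold insertPos; split_ifs <;> omega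
  intro Q hPQ
  have := hc P ReflTransGen.refl
  rw [hfix Q hPQ]; omega

lemma pos_le_of_mem_neverLast_of_notMem (hδ : δ ≠ ε) (hc : c ∈ P.neverLast δ)
    (hb : b ∈ P.neverLast δ) (hb' : b ∉ P.neverLast ε) : (P.p δ c).val ≤ (P.p δ b).val := by
  obtain ⟨Q, hPQ, hQb⟩ : ∃ Q, InRauzyClass P Q ∧ (Q.p ε b).val = Fintype.card A - 1 := by
    simpa [RPair.neverLast] using hb'
  rw [← pos_eq_of_mem_neverLast hc hPQ, ← pos_eq_of_mem_neverLast hb hPQ]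
  exact pos_le_pos_last_of_mem_neverLast hc hPQ hδ hQb

lemma mem_neverLast_inter_of_pos_le (hδ : δ ≠ ε) (hc : c ∈ P.neverLast δ ∩ P.neverLast ε)
    (hb : (P.p δ b).val ≤ (P.p δ c).val) : b ∈ P.neverLast δ ∩ P.neverLast ε := by
  have hbδ := mem_neverLast_of_pos_le hc.1 hb
  refine ⟨hbδ, ?_⟩
  by_contra hbε
  have hbc := pos_le_of_mem_neverLast_of_notMem hδ hc.1 hbδ hbε
  exact hbε (RPair.eq_of_pos_eq (le_antisymm hb hbc) ▸ hc.2)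

lemma card_filter_pos_lt {N : ℕ} (e : A ≃ Fin N) {m : ℕ} (hm : m ≤ N) :
    #{c | (e c).val < m} = m := by
  rw [Finset.card_equiv e (t := {i : Fin N | i.val < m}) (by simp), Fin.card_filter_val_lt]
  omega

lemma card_filter_pos_Icc {N : ℕ} (e : A ≃ Fin N) {lo hi : ℕ} (hhi : hi < N) :
    #{c | lo ≤ (e c).val ∧ (e c).val ≤ hi} = hi + 1 - lo := by
  rw [Finset.card_equiv e (t := {i : Fin N | lo ≤ i.val ∧ i.val ≤ hi}) (by simp), ← Nat.card_Icc,
    ← card_map Fin.valEmbedding]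
  congr 1
  ext x
  simp only [mem_map, mem_filter, mem_univ, true_and, Fin.valEmbedding_apply, mem_Icc]
  exact ⟨fun ⟨i, hi, hix⟩ => hix ▸ hi, fun hx => ⟨⟨x, by omega⟩, hx, rfl⟩⟩

lemma eq_filter_pos_lt_card {N : ℕ} (e : A ≃ Fin N) {S : Finset A}
    (hS : ∀ c ∈ S, ∀ b, (e b).val ≤ (e c).val → b ∈ S) :
    S = ({c | (e c).val < #S} : Finset A) := by
  have hSN : #S ≤ N :=
    (card_le_univ S).trans ((Fintype.card_congr e).trans (Fintype.card_fin N)).le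
  refine Finset.eq_of_subset_of_card_le (fun c hc => ?_) (card_filter_pos_lt e hSN).le
  have hsub : ({b | (e b).val < (e c).val + 1} : Finset A) ⊆ S := fun b hb =>
    hS c hc b (by simp only [mem_filter, mem_univ, true_and] at hb; omega)
  have := card_le_card hsub
  rw [card_filter_pos_lt e (by omega)] at this
  simp only [mem_filter, mem_univ, true_and]; omega

lemma IrreduciblePair.eq_empty_or_eq_univ (hP : IrreduciblePair P) {S : Finset A}
    (hS : ∀ δ, ∀ c ∈ S, ∀ b, (P.p δ b).val ≤ (P.p δ c).val → b ∈ S) : S = ∅ ∨ S = univ := by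
  by_contra hne
  push Not at hne
  have hS01 := (eq_filter_pos_lt_card (P.p 0) (hS 0)).symm.trans
    (eq_filter_pos_lt_card (P.p 1) (hS 1))
  refine hP (#S) (card_pos.mpr hne.1)
    (lt_of_le_of_ne (card_le_univ S) ((card_eq_iff_eq_univ S).not.mpr hne.2)) ?_
  simpa using congrArg (fun s : Finset A => (s : Set A)) hS01

/-- If `a` were never last in the bottom row, the letters never last in either row would form a
nontrivial common initial segment of the two rows. -/
theorem IrreduciblePair.exists_inRauzyClass_pos_eq_last {a : A} (h2 : 2 ≤ Fintype.card A)
    (hP : IrreduciblePair P) (ha : (P.p 0 a).val = 0) :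
    ∃ Q, InRauzyClass P Q ∧ (Q.p 1 a).val = Fintype.card A - 1 := by
  classical
  by_contra hne
  push Not at hne
  set S : Finset A := {c | c ∈ P.neverLast 0 ∩ P.neverLast 1}
  have hS : ∀ δ, ∀ c ∈ S, ∀ b, (P.p δ b).val ≤ (P.p δ c).val → b ∈ S := by
    intro δ c hc b hb
    simp only [S, mem_filter, mem_univ, true_and] at hc ⊢
    fin_cases δ
    · exact mem_neverLast_inter_of_pos_le (by decide) hc hb
    · rw [Set.inter_comm] at hc ⊢
      exact mem_neverLast_inter_of_pos_le (by decide) hc hb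
  have haS : a ∈ S := by
    simp only [S, mem_filter, mem_univ, true_and]
    exact ⟨fun Q hPQ => by rw [pos_eq_zero_of_inRauzyClass hPQ ha]; omega, hne⟩
  obtain ⟨z, hz⟩ := P.exists_pos_eq 0 (m := Fintype.card A - 1) (by omega)
  have hzS : z ∉ S := by
    simp only [S, mem_filter, mem_univ, true_and]
    exact fun hz' => hz'.1 P ReflTransGen.refl hz
  rcases hP.eq_empty_or_eq_univ hS with hS | hS
  · simp [hS] at haS
  · simp [hS] at hzS

theorem IrreduciblePair.exists_standardPair (h2 : 2 ≤ Fintype.card A) (hP : IrreduciblePair P) :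
    ∃ Q, InRauzyClass P Q ∧ StandardPair Q := by
  obtain ⟨a, ha⟩ := P.exists_pos_eq 0 (m := 0) (by omega)
  obtain ⟨z, hz⟩ := P.exists_pos_eq 1 (m := 0) (by omega)
  obtain ⟨Q, hPQ, haQ1⟩ := hP.exists_inRauzyClass_pos_eq_last h2 ha
  have haQ0 := pos_eq_zero_of_inRauzyClass hPQ ha
  have hzQ1 := pos_eq_zero_of_inRauzyClass hPQ hz
  have hzQ0 : (Q.p 0 z).val ≠ 0 := by
    intro h
    obtain rfl : z = a := RPair.eq_of_pos_eq (h.trans haQ0.symm)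
    omega
  obtain ⟨Q', hQQ', h1, h0⟩ := RPair.exists_rotate (δ := 0) (by decide) haQ1 haQ0
    (t := Fintype.card A - 1 - (Q.p 0 z).val) (by omega)
  refine ⟨Q', hPQ.trans hQQ', fun b hb => ?_, fun b hb => ?_⟩
  · rw [h0] at hb
    obtain rfl : b = a := RPair.eq_of_pos_eq (δ := 0) (P := Q) (by
      unfold rotatePos at hb; split_ifs at hb <;> omega)
    rw [h1]; exact haQ1
  · rw [h1] at hb
    obtain rfl : b = z := RPair.eq_of_pos_eq (hb.trans hzQ1.symm)
    rw [h0]; unfold rotatePos; split_ifs <;> omega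

/-- For a standard pair, whose interior letters fill the positions `1, …, n - 2` (0-indexed) of
each row: the restriction to the interior letters is reducible at `j`. -/
def RPair.SplitsAt (q : RPair A) (j : ℕ) : Prop :=
  ∀ c, (1 ≤ (q.p 0 c).val ∧ (q.p 0 c).val ≤ j) ↔ (1 ≤ (q.p 1 c).val ∧ (q.p 1 c).val ≤ j)

variable {q : RPair A}

lemma StandardPair.pos_eq_last_iff (hq : StandardPair q) (ε : Fin 2) (c : A) :
    (q.p ε c).val = Fintype.card A - 1 ↔ (q.p (1 - ε) c).val = 0 := by
  have hlast : ∀ c', (q.p (1 - ε) c').val = 0 → (q.p ε c').val = Fintype.card A - 1 := by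
    fin_cases ε
    · exact hq.2
    · exact hq.1
  refine ⟨fun hc => ?_, hlast c⟩
  obtain ⟨c', hc'⟩ := q.exists_pos_eq (1 - ε) (m := 0) (q.p ε c).pos
  rwa [RPair.eq_of_pos_eq (hc.trans (hlast c' hc').symm)]

lemma StandardPair.mem_interiorLetters_iff [DecidableEq A] (hq : StandardPair q) (δ : Fin 2) :
    c ∈ interiorLetters q ↔ 1 ≤ (q.p δ c).val ∧ (q.p δ c).val ≤ Fintype.card A - 2 := by
  have h0 := hq.pos_eq_last_iff 0 c
  have h1 := hq.pos_eq_last_iff 1 c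
  simp only [interiorLetters, mem_filter, mem_univ, true_and]
  fin_cases δ <;> simp at h0 h1 ⊢ <;> omega

lemma StandardPair.degenerateStar_of_splitsAt (h3 : 3 ≤ Fintype.card A) (hq : StandardPair q)
    (h : q.SplitsAt (Fintype.card A - 3)) : DegenerateStar q := by
  classical
  obtain ⟨c, hc⟩ := q.exists_pos_eq 0 (m := Fintype.card A - 2) (by omega)
  have := (hq.mem_interiorLetters_iff 1).mp
    ((hq.mem_interiorLetters_iff (c := c) 0).mpr (by omega))
  have := h c
  exact ⟨hq, c, hc, by omega⟩

lemma StandardPair.splitsAt_sub_three_of_pos_eq (hq : StandardPair q) {u : A}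
    (hu0 : (q.p 0 u).val = Fintype.card A - 2) (hu1 : (q.p 1 u).val = Fintype.card A - 2) :
    q.SplitsAt (Fintype.card A - 3) := by
  classical
  intro c
  have key : ∀ δ, (q.p δ u).val = Fintype.card A - 2 →
      ((1 ≤ (q.p δ c).val ∧ (q.p δ c).val ≤ Fintype.card A - 3) ↔
        c ∈ interiorLetters q ∧ c ≠ u) := by
    intro δ hu
    rw [hq.mem_interiorLetters_iff δ]
    refine ⟨fun h => ⟨by omega, by rintro rfl; omega⟩, fun ⟨h, hne⟩ => ?_⟩
    have : (q.p δ c).val ≠ Fintype.card A - 2 := fun h' =>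
      hne (RPair.eq_of_pos_eq (h'.trans hu.symm))
    omega
  rw [key 0 hu0, key 1 hu1]

lemma IsRestrictionOf.pos_add_one [DecidableEq A] (hq : StandardPair q)
    {P' : RPair (interiorLetters q)} (hres : IsRestrictionOf q (interiorLetters q) P')
    (δ : Fin 2) (b : interiorLetters q) : (P'.p δ b).val + 1 = (q.p δ b).val := by
  have hb := (hq.mem_interiorLetters_iff δ).mp b.2
  rw [hres δ b, ← card_map (Function.Embedding.subtype (· ∈ interiorLetters q))]
  have : (univ.filter fun c : interiorLetters q => q.p δ c ≤ q.p δ b).map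
      (Function.Embedding.subtype _) =
      ({c | 1 ≤ (q.p δ c).val ∧ (q.p δ c).val ≤ (q.p δ b).val} : Finset A) := by
    ext c
    simp only [mem_map, mem_filter, mem_univ, true_and, Function.Embedding.subtype_apply,
      Subtype.exists, exists_and_right, exists_eq_right, hq.mem_interiorLetters_iff δ, Fin.le_def,
      exists_prop]
    omega
  rw [this, card_filter_pos_Icc _ (q.p δ b).isLt]
  omega

theorem StandardPair.goodPair_of_forall_not_splitsAt [DecidableEq A] (hq : StandardPair q)
    (h : ∀ j, 1 ≤ j → j ≤ Fintype.card A - 3 → ¬q.SplitsAt j) : GoodPair q := by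
  refine ⟨hq, fun P' hres k hk hkn hsplit => ?_⟩
  have hkn' : k ≤ Fintype.card A - 3 := by
    obtain ⟨c₀⟩ := Fintype.card_pos_iff.mp (hk.trans hkn)
    have : interiorLetters q =
        ({c | 1 ≤ (q.p 0 c).val ∧ (q.p 0 c).val ≤ Fintype.card A - 2} : Finset A) := by
      ext c; simp only [mem_filter, mem_univ, true_and, hq.mem_interiorLetters_iff 0]
    rw [Fintype.card_coe, this, card_filter_pos_Icc _ (by have := (q.p 0 c₀).pos; omega)] at hkn
    omega
  refine h k hk hkn' fun c => ?_
  have key : ∀ δ, (1 ≤ (q.p δ c).val ∧ (q.p δ c).val ≤ k) ↔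
      ∃ hc : c ∈ interiorLetters q, (P'.p δ ⟨c, hc⟩).val < k := by
    intro δ
    refine ⟨fun hc => ⟨(hq.mem_interiorLetters_iff (c := c) δ).mpr (by omega), ?_⟩,
      fun ⟨hc, hlt⟩ => ?_⟩
    · have := hres.pos_add_one hq δ ⟨c, (hq.mem_interiorLetters_iff (c := c) δ).mpr (by omega)⟩
      dsimp only at this
      omega
    · have := hres.pos_add_one hq δ ⟨c, hc⟩
      have := (hq.mem_interiorLetters_iff δ).mp hc
      dsimp only at *
      omega
  rw [key 0, key 1]
  exact exists_congr fun hc => Set.ext_iff.mp hsplit ⟨c, hc⟩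

/-- The position of `x` after exchanging the blocks of positions `1, …, a` and `a + 1, …, b`. -/
def swapBlocks (a b x : ℕ) : ℕ :=
  if x = 0 ∨ b < x then x else if x ≤ a then x + (b - a) else x - a

lemma StandardPair.of_swapBlocks (hq : StandardPair q) {Q : RPair A} {a₀ b₀ a₁ b₁ : ℕ}
    (hb₀ : b₀ ≤ Fintype.card A - 2) (hb₁ : b₁ ≤ Fintype.card A - 2)
    (h₀ : ∀ c, (Q.p 0 c).val = swapBlocks a₀ b₀ (q.p 0 c).val)
    (h₁ : ∀ c, (Q.p 1 c).val = swapBlocks a₁ b₁ (q.p 1 c).val) : StandardPair Q := by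
  refine ⟨fun c hc => ?_, fun c hc => ?_⟩
  · rw [h₀] at hc
    have := hq.1 c (by unfold swapBlocks at hc; split_ifs at hc <;> omega)
    rw [h₁, this]; unfold swapBlocks; split_ifs <;> omega
  · rw [h₁] at hc
    have := hq.2 c (by unfold swapBlocks at hc; split_ifs at hc <;> omega)
    rw [h₀, this]; unfold swapBlocks; split_ifs <;> omega

lemma RPair.exists_rotate_rotate {z w : A} {μ t ν s : ℕ}
    (hz : (q.p 0 z).val = Fintype.card A - 1) (hzμ : (q.p 1 z).val = μ)
    (ht : t ≤ Fintype.card A - 1 - μ)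
    (hw : rotatePos (Fintype.card A) μ t (q.p 1 w).val = Fintype.card A - 1)
    (hwν : (q.p 0 w).val = ν) (hs : s ≤ Fintype.card A - 1 - ν) :
    ∃ Q, InRauzyClass q Q ∧
      (∀ c, (Q.p 0 c).val = rotatePos (Fintype.card A) ν s (q.p 0 c).val) ∧
      (∀ c, (Q.p 1 c).val = rotatePos (Fintype.card A) μ t (q.p 1 c).val) := by
  obtain ⟨Q₁, hqQ₁, hQ₁0, hQ₁1⟩ := RPair.exists_rotate (δ := 1) (ε := 0) (by decide) hz hzμ ht
  obtain ⟨Q₂, hQ₁Q₂, hQ₂1, hQ₂0⟩ := RPair.exists_rotate (δ := 0) (ε := 1) (by decide)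
    (by rw [hQ₁1]; exact hw) (by rw [hQ₁0]; exact hwν) hs
  exact ⟨Q₂, hqQ₁.trans hQ₁Q₂, fun c => by rw [hQ₂0, hQ₁0], fun c => by rw [hQ₂1, hQ₁1]⟩

lemma StandardPair.exists_swapBlocks (hq : StandardPair q) {k : ℕ} {v u : A} (hk : 1 ≤ k)
    (hv : (q.p 1 v).val = k) (hvn : (q.p 0 v).val ≤ Fintype.card A - 3)
    (hu : (q.p 0 u).val = Fintype.card A - 2) (hku : k < (q.p 1 u).val)
    (hun : (q.p 1 u).val ≤ Fintype.card A - 2) :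
    ∃ Q, InRauzyClass q Q ∧
      (∀ c, (Q.p 0 c).val = swapBlocks (q.p 0 v).val (Fintype.card A - 2) (q.p 0 c).val) ∧
      (∀ c, (Q.p 1 c).val = swapBlocks k (q.p 1 u).val (q.p 1 c).val) := by
  set n := Fintype.card A
  set m := (q.p 0 v).val
  set i := (q.p 1 u).val
  obtain ⟨a, ha⟩ := q.exists_pos_eq 0 (m := 0) (by omega)
  obtain ⟨z, hz⟩ := q.exists_pos_eq 1 (m := 0) (by omega)
  have ha1 := hq.1 a ha
  have hz0 := hq.2 z hz
  -- `v` becomes last in the bottom row, then `z` is inserted after it in the top row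
  obtain ⟨Q₁, hqQ₁, hQ₁0, hQ₁1⟩ :=
    RPair.exists_rotate_rotate (μ := 0) (t := n - 1 - k) (ν := m) (s := 1) hz0 hz (by omega)
      (by rw [hv]; unfold rotatePos; split_ifs <;> omega) rfl (by omega)
  -- now `u` is last in the top row; rotating the bottom row brings `a` to its end
  obtain ⟨Q₂, hQ₁Q₂, hQ₂0, hQ₂1⟩ :=
    RPair.exists_rotate_rotate (μ := i - k) (t := k) (ν := 0) (s := n - 2 - m) (w := a)
      (by rw [hQ₁0, hu]; unfold rotatePos; split_ifs <;> omega)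
      (by rw [hQ₁1]; unfold rotatePos; split_ifs <;> omega)
      (by omega) (by rw [hQ₁1, ha1]; unfold rotatePos; split_ifs <;> omega)
      (by rw [hQ₁0, ha]; unfold rotatePos; split_ifs <;> omega) (by omega)
  refine ⟨Q₂, hqQ₁.trans hQ₁Q₂, fun c => ?_, fun c => ?_⟩
  · rw [hQ₂0, hQ₁0]; unfold rotatePos swapBlocks; split_ifs <;> omega
  · rw [hQ₂1, hQ₁1]; unfold rotatePos swapBlocks; split_ifs <;> omega

/-- For `j ≥ i` the letter `v` tells the two rows apart; for `j < i` the letters that moved into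
positions `1, …, j` outside the common block of `q` give a splitting of `q` at `min i (k + j)`. -/
lemma not_splitsAt_of_swapBlocks {Q : RPair A} {k i j : ℕ} {v : A} (hk1 : 1 ≤ k)
    (hk : q.SplitsAt k) (hmax : ∀ j, k < j → j ≤ Fintype.card A - 3 → ¬q.SplitsAt j)
    (hv : (q.p 1 v).val = k) (hki : k < i) (hin : i ≤ Fintype.card A - 3)
    (h₀ : ∀ c, (Q.p 0 c).val = swapBlocks (q.p 0 v).val (Fintype.card A - 2) (q.p 0 c).val)
    (h₁ : ∀ c, (Q.p 1 c).val = swapBlocks k i (q.p 1 c).val)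
    (hkj : k ≤ j) (hjn : j ≤ Fintype.card A - 3) : ¬Q.SplitsAt j := by
  intro hj
  set n := Fintype.card A
  set m := (q.p 0 v).val
  have hm := hk v
  rw [hv] at hm
  by_cases hij : i ≤ j
  · have := hj v
    rw [h₀, h₁, hv] at this
    unfold swapBlocks at this; split_ifs at this <;> omega
  set L := min i (k + j)
  have hdiff : ∀ c, (k + 1 ≤ (q.p 0 c).val ∧ (q.p 0 c).val ≤ min (m + j) (n - 2)) ↔
      (k + 1 ≤ (q.p 1 c).val ∧ (q.p 1 c).val ≤ L) := by
    intro c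
    have hjc := hj c
    have hkc := hk c
    rw [h₀, h₁] at hjc
    unfold swapBlocks at hjc; split_ifs at hjc <;> omega
  have hL : min (m + j) (n - 2) = L := by
    have := congrArg card (filter_congr fun c (_ : c ∈ univ) => hdiff c)
    rw [card_filter_pos_Icc _ (by omega), card_filter_pos_Icc _ (by omega)] at this
    omega
  refine hmax L (by omega) (by omega) fun c => ?_
  have := hdiff c
  have := hk c
  omega

theorem StandardPair.exists_not_splitsAt_of_splitsAt (hq : StandardPair q) {k : ℕ} (hk1 : 1 ≤ k)
    (hkn : k + 4 ≤ Fintype.card A) (hk : q.SplitsAt k)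
    (hmax : ∀ j, k < j → j ≤ Fintype.card A - 3 → ¬q.SplitsAt j) :
    ∃ Q, InRauzyClass q Q ∧ StandardPair Q ∧
      ∀ j, k ≤ j → j ≤ Fintype.card A - 3 → ¬Q.SplitsAt j := by
  classical
  obtain ⟨v, hv⟩ := q.exists_pos_eq 1 (m := k) (by omega)
  obtain ⟨u, hu⟩ := q.exists_pos_eq 0 (m := Fintype.card A - 2) (by omega)
  have hvk := hk v
  have hu1 := (hq.mem_interiorLetters_iff 1).mp ((hq.mem_interiorLetters_iff (c := u) 0).mpr
    (by omega))
  have huk := hk u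
  have hun : (q.p 1 u).val ≠ Fintype.card A - 2 := fun h =>
    hmax _ (by omega) le_rfl (hq.splitsAt_sub_three_of_pos_eq hu h)
  obtain ⟨Q, hqQ, hQ₀, hQ₁⟩ := hq.exists_swapBlocks hk1 hv (by omega) hu (by omega) (by omega)
  exact ⟨Q, hqQ, hq.of_swapBlocks le_rfl (by omega) hQ₀ hQ₁, fun j hkj hjn =>
    not_splitsAt_of_swapBlocks hk1 hk hmax hv (by omega) (by omega) hQ₀ hQ₁ hkj hjn⟩

theorem StandardPair.exists_good_or_degenerateStar [DecidableEq A] (h3 : 3 ≤ Fintype.card A)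
    (hq : StandardPair q) : ∃ Q, InRauzyClass q Q ∧ (GoodPair Q ∨ DegenerateStar Q) := by
  suffices ∀ K (q : RPair A), StandardPair q →
      (∀ j, K < j → j ≤ Fintype.card A - 3 → ¬q.SplitsAt j) →
      ∃ Q, InRauzyClass q Q ∧ (GoodPair Q ∨ DegenerateStar Q) from
    this (Fintype.card A - 3) q hq fun j hj hjn => absurd hjn (by omega)
  intro K
  induction K with
  | zero => exact fun q hq hmax =>
      ⟨q, ReflTransGen.refl, Or.inl (hq.goodPair_of_forall_not_splitsAt hmax)⟩
  | succ K ih =>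
    intro q hq hmax
    by_cases hK : K + 1 ≤ Fintype.card A - 3 ∧ q.SplitsAt (K + 1)
    · rcases hK.1.eq_or_lt with hKn | hKn
      · exact ⟨q, ReflTransGen.refl, Or.inr (hq.degenerateStar_of_splitsAt h3 (hKn ▸ hK.2))⟩
      obtain ⟨Q, hqQ, hQ, hQmax⟩ :=
        hq.exists_not_splitsAt_of_splitsAt (by omega) (by omega) hK.2 hmax
      obtain ⟨R, hQR, hR⟩ := ih Q hQ fun j hj hjn => hQmax j (by omega) hjn
      exact ⟨R, hqQ.trans hQR, hR⟩
    · refine ih q hq fun j hj hjn hsplit => ?_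
      by_cases hjK : j = K + 1
      · exact hK ⟨hjK ▸ hjn, hjK ▸ hsplit⟩
      · exact hmax j (by omega) hjn hsplit

end

/-- Every Rauzy class on at least 4 letters contains a good pair or a
degenerate* pair. -/
theorem good_or_degenerate
    {A : Type*} [Fintype A] [DecidableEq A] (hA : 4 ≤ Fintype.card A)
    (P : RPair A) (hP : IrreduciblePair P) :
    ∃ Q : RPair A, InRauzyClass P Q ∧ (GoodPair Q ∨ DegenerateStar Q) := by
  obtain ⟨q, hPq, hq⟩ := hP.exists_standardPair (by omega)
  obtain ⟨Q, hqQ, hQ⟩ := hq.exists_good_or_degenerateStar (by omega)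
  exact ⟨Q, hPq.trans hqQ, hQ⟩
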